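/- arXiv:1703.08896 — 4 statements merged into one kernel-verified Lean document; each statement's English description precedes it below -/
import Mathlib

section
/- Let X ⊆ ℝ^m be a nonempty closed convex set, let F : ℝ^m → ℝ be differentiable and convex with minimizer set X, and suppose x : [0,∞) → ℝ^m is differentiable with ẋ(t) = -∇F(x(t)). Then the function V(t) = ½‖x(t) - P_X(x(t))‖² satisfies V̇(t) ≤ -(F(x(t)) - F(P_X(x(t)))) ≤ 0, where P_X is the projection onto X. -/
open InnerProductSpace

variable {E : Type*} [NormedAddCommGroup E] [InnerProductSpace ℝ E]

/-- Variational inequality for an abstract nearest-point map. -/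
lemma varineq_aux {X : Set E} (hXne : X.Nonempty) (hXconv : Convex ℝ X)
    (P : E → E) (hP : ∀ s, P s ∈ X ∧ ∀ y ∈ X, ‖s - P s‖ ≤ ‖s - y‖) :
    ∀ s, ∀ w ∈ X, inner ℝ (s - P s) (w - P s) ≤ (0 : ℝ) := by
  intro s
  have : Nonempty X := hXne.to_subtype
  have hinf : ‖s - P s‖ = ⨅ w : X, ‖s - (w : E)‖ := by
    refine le_antisymm (le_ciInf fun w => (hP s).2 w w.2) ?_
    exact ciInf_le ⟨0, fun r ⟨w, hw⟩ => hw ▸ norm_nonneg _⟩ (⟨P s, (hP s).1⟩ : X)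
  exact (norm_eq_iInf_iff_real_inner_le_zero hXconv (hP s).1).1 hinf

lemma proj_sq_lip {X : Set E} (hXne : X.Nonempty) (hXconv : Convex ℝ X)
    (P : E → E) (hP : ∀ s, P s ∈ X ∧ ∀ y ∈ X, ‖s - P s‖ ≤ ‖s - y‖) :
    ∀ s s', ‖P s - P s'‖ ≤ ‖s - s'‖ := by
  intro s s'
  have hv := varineq_aux hXne hXconv P hP
  have a : inner ℝ (s - P s) (P s' - P s) ≤ (0:ℝ) := hv s (P s') (hP s').1
  have b : inner ℝ (s' - P s') (P s - P s') ≤ (0:ℝ) := hv s' (P s) (hP s).1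
  have key : ‖P s - P s'‖ ^ 2 ≤ inner ℝ (s - s') (P s - P s') := by
    have h1 : inner ℝ (s - s') (P s - P s')
        = inner ℝ (s - P s) (P s - P s') - inner ℝ (s' - P s') (P s - P s')
          + ‖P s - P s'‖ ^ 2 := by
      rw [← real_inner_self_eq_norm_sq]
      simp only [inner_sub_left, inner_sub_right]
      ring
    have h2 : inner ℝ (s - P s) (P s - P s') = -(inner ℝ (s - P s) (P s' - P s) : ℝ) := by
      rw [← inner_neg_right]; congr 1; abel
    rw [h1, h2]; linarith
  have h3 : (inner ℝ (s - s') (P s - P s') : ℝ) ≤ ‖s - s'‖ * ‖P s - P s'‖ :=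
    real_inner_le_norm _ _
  rcases eq_or_lt_of_le (norm_nonneg (P s - P s')) with h | h
  · rw [← h]; exact norm_nonneg _
  · have := key.trans h3
    nlinarith

lemma hasFDerivAt_half_sq_dist {X : Set E} (hXne : X.Nonempty) (hXconv : Convex ℝ X)
    (P : E → E) (hP : ∀ s, P s ∈ X ∧ ∀ y ∈ X, ‖s - P s‖ ≤ ‖s - y‖) (z : E) :
    HasFDerivAt (fun s => (1 / 2 : ℝ) * ‖s - P s‖ ^ 2)
      (innerSL ℝ (z - P z)) z := by
  have hlip := proj_sq_lip hXne hXconv P hP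
  have key : ∀ s', |(1/2 : ℝ) * ‖s' - P s'‖ ^ 2 - (1/2) * ‖z - P z‖ ^ 2
      - inner ℝ (z - P z) (s' - z)| ≤ (3/2) * ‖s' - z‖ ^ 2 := by
    intro s'
    set q : ℝ := inner ℝ (z - P z) (s' - z) with hq
    set A : ℝ := inner ℝ (s' - P s') (s' - z) with hA
    have upper : (1/2 : ℝ) * ‖s' - P s'‖ ^ 2
        ≤ (1/2) * ‖z - P z‖ ^ 2 + q + (1/2) * ‖s' - z‖ ^ 2 := by
      have h1 : ‖s' - P s'‖ ≤ ‖s' - P z‖ := (hP s').2 _ (hP z).1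
      have h2 : ‖s' - P z‖ ^ 2 = ‖z - P z‖ ^ 2 + 2 * q + ‖s' - z‖ ^ 2 := by
        have he : s' - P z = (z - P z) + (s' - z) := by abel
        rw [he, norm_add_sq_real]
      nlinarith [norm_nonneg (s' - P s'), norm_nonneg (s' - P z)]
    have lower : (1/2 : ℝ) * ‖z - P z‖ ^ 2 + q - (3/2) * ‖s' - z‖ ^ 2
        ≤ (1/2) * ‖s' - P s'‖ ^ 2 := by
      have h1 : ‖z - P z‖ ≤ ‖z - P s'‖ := (hP z).2 _ (hP s').1
      have h2 : ‖z - P s'‖ ^ 2 = ‖s' - P s'‖ ^ 2 - 2 * A + ‖s' - z‖ ^ 2 := by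
        have he : z - P s' = (s' - P s') - (s' - z) := by abel
        rw [he, norm_sub_sq_real]
      have h3 : q - A = -(inner ℝ (s' - z) (s' - z) : ℝ)
          + inner ℝ (P s' - P z) (s' - z) := by
        rw [hq, hA, ← inner_sub_left, ← inner_neg_left, ← inner_add_left]
        congr 1
        abel
      have h4 : (inner ℝ (P s' - P z) (s' - z) : ℝ) ≤ ‖s' - z‖ ^ 2 := by
        calc (inner ℝ (P s' - P z) (s' - z) : ℝ) ≤ ‖P s' - P z‖ * ‖s' - z‖ :=
              real_inner_le_norm _ _
          _ ≤ ‖s' - z‖ * ‖s' - z‖ :=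
              mul_le_mul_of_nonneg_right (hlip s' z) (norm_nonneg _)
          _ = ‖s' - z‖ ^ 2 := by ring
      have h5 : (inner ℝ (s' - z) (s' - z) : ℝ) = ‖s' - z‖ ^ 2 :=
        real_inner_self_eq_norm_sq _
      have h6 : ‖z - P z‖ ^ 2 ≤ ‖z - P s'‖ ^ 2 := by
        nlinarith [norm_nonneg (z - P z)]
      linarith
    rw [abs_le]
    constructor <;> linarith
  rw [hasFDerivAt_iff_isLittleO_nhds_zero]
  have hbig : (fun h : E => (1/2 : ℝ) * ‖(z + h) - P (z + h)‖ ^ 2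
      - (1/2) * ‖z - P z‖ ^ 2 - (innerSL ℝ (z - P z)) h)
      =O[nhds 0] fun h : E => ‖h‖ ^ 2 := by
    refine Asymptotics.IsBigO.of_bound (3/2) (Filter.Eventually.of_forall fun h => ?_)
    have := key (z + h)
    simp only [add_sub_cancel_left] at this
    simpa [abs_of_nonneg (sq_nonneg ‖h‖), sq_abs, inner_sub_left] using this
  refine hbig.trans_isLittleO ?_
  have hlo : (fun h : E => ‖h‖ ^ 2) =o[nhds 0] fun h : E => ‖h‖ := by
    have h1 : (fun h : E => ‖h‖) =o[nhds 0] fun _ : E => (1:ℝ) := by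
      rw [Asymptotics.isLittleO_one_iff]
      simpa using (continuous_norm.tendsto (0 : E))
    have h2 := (Asymptotics.isBigO_refl (fun h : E => ‖h‖) (nhds 0)).mul_isLittleO h1
    simpa [pow_two] using h2
  exact Asymptotics.isLittleO_norm_right.mp hlo

lemma gradient_ineq_aux [CompleteSpace E] (F : E → ℝ) (hdiff : Differentiable ℝ F)
    (hconv : ConvexOn ℝ Set.univ F) (z p : E) :
    inner ℝ (gradient F z) (p - z) ≤ F p - F z := by
  set φ : ℝ → ℝ := fun τ => F (τ • (p - z) + z) with hφ
  have hφconv : ConvexOn ℝ Set.univ φ := by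
    have h := hconv.comp_affineMap (AffineMap.lineMap z p : ℝ →ᵃ[ℝ] E)
    rw [Set.preimage_univ] at h
    have heq : φ = F ∘ (AffineMap.lineMap z p : ℝ →ᵃ[ℝ] E) := by
      funext τ
      simp only [hφ, Function.comp_apply, AffineMap.lineMap_apply_module]
      congr 1
      module
    rw [heq]; exact h
  have hmap : HasDerivAt (fun τ : ℝ => τ • (p - z) + z) (p - z) 0 := by
    simpa using ((hasDerivAt_id (0:ℝ)).smul_const (p - z)).add_const z
  have hF : HasFDerivAt F (toDualMap ℝ E (gradient F z)) z :=
    hasGradientAt_iff_hasFDerivAt.mp (hdiff z).hasGradientAt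
  have hF' : HasFDerivAt F (toDualMap ℝ E (gradient F z)) ((0:ℝ) • (p - z) + z) := by
    simpa using hF
  have hφder : HasDerivAt φ (inner ℝ (gradient F z) (p - z)) 0 := by
    exact hF'.comp_hasDerivAt 0 hmap
  have := hφconv.le_slope_of_hasDerivAt (Set.mem_univ (0:ℝ)) (Set.mem_univ (1:ℝ))
    one_pos hφder
  simpa [slope_def_field, hφ] using this

/-- Along gradient flow ẋ = -∇F(x), the function V(t) = ½‖x(t) - P_X(x(t))‖²
satisfies V̇(t) ≤ -(F(x(t)) - F(P_X(x(t)))) ≤ 0, where P_X is the Euclidean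
projection onto the nonempty closed convex minimizer set X of F. -/
theorem lyapunov_projection_decrease (m : ℕ)
    (X : Set (EuclideanSpace ℝ (Fin m)))
    (hXne : X.Nonempty) (hXcl : IsClosed X) (hXconv : Convex ℝ X)
    (F : EuclideanSpace ℝ (Fin m) → ℝ)
    (hdiff : Differentiable ℝ F)
    (hconv : ConvexOn ℝ Set.univ F)
    (hargmin : X = {s | ∀ y, F s ≤ F y})
    (P : EuclideanSpace ℝ (Fin m) → EuclideanSpace ℝ (Fin m))
    (hP : ∀ s, P s ∈ X ∧ ∀ y ∈ X, ‖s - P s‖ ≤ ‖s - y‖)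
    (x : ℝ → EuclideanSpace ℝ (Fin m))
    (hx : ∀ t, HasDerivAt x (-gradient F (x t)) t)
    (V : ℝ → ℝ)
    (hV : V = fun t => (1 / 2) * ‖x t - P (x t)‖ ^ 2) :
    ∀ t, 0 ≤ t → ∃ v : ℝ, HasDerivAt V v t ∧
      v ≤ -(F (x t) - F (P (x t))) ∧ -(F (x t) - F (P (x t))) ≤ 0 := by
  intro t _
  set z := x t with hz
  set p := P z with hp
  refine ⟨inner ℝ (z - p) (-gradient F z), ?_, ?_, ?_⟩
  · subst hV
    have hg := hasFDerivAt_half_sq_dist hXne hXconv P hP z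
    exact hg.comp_hasDerivAt t (hx t)
  · have hgi := gradient_ineq_aux F hdiff hconv z p
    have : (inner ℝ (z - p) (-gradient F z) : ℝ) = inner ℝ (gradient F z) (p - z) := by
      rw [inner_neg_right, real_inner_comm, ← inner_neg_right]
      congr 1
      abel
    rw [this]
    linarith
  · have hpX : p ∈ X := (hP z).1
    rw [hargmin] at hpX
    have := hpX z
    linarith
end

section
/- Let F : ℝ^m → ℝ be differentiable convex with nonempty compact minimizer set X, and let V(t) = ½‖x(t) - P_X(x(t))‖² along a trajectory satisfying V̇(t) ≤ -(F(x(t)) - min F) + c·ε for constants c > 0 and ε > 0, where trajectories remain in a bounded set. If ε can be taken arbitrarily small for t sufficiently large, then F(x(t)) → min F as t → ∞. -/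
/-- If V(t) = ½‖x(t)-P_X(x(t))‖² satisfies V̇ ≤ -(F(x(t)) - min F) + cε for every
ε > 0 eventually (trajectory bounded), then F(x(t)) → min F. -/
theorem convergence_to_min (m : ℕ)
    (F : EuclideanSpace ℝ (Fin m) → ℝ)
    (hdiff : Differentiable ℝ F)
    (hconv : ConvexOn ℝ Set.univ F)
    (X : Set (EuclideanSpace ℝ (Fin m)))
    (hargmin : X = {s | ∀ y, F s ≤ F y})
    (hXne : X.Nonempty) (hXcomp : IsCompact X)
    (Fmin : ℝ) (hFmin : ∀ y, Fmin ≤ F y) (hFmin' : ∀ s ∈ X, F s = Fmin)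
    (P : EuclideanSpace ℝ (Fin m) → EuclideanSpace ℝ (Fin m))
    (hP : ∀ s, P s ∈ X ∧ ∀ y ∈ X, ‖s - P s‖ ≤ ‖s - y‖)
    (x : ℝ → EuclideanSpace ℝ (Fin m))
    (hxbdd : Bornology.IsBounded (Set.range x))
    (V V' : ℝ → ℝ)
    (hV : V = fun t => (1 / 2) * ‖x t - P (x t)‖ ^ 2)
    (hV' : ∀ t, 0 ≤ t → HasDerivAt V (V' t) t)
    (c : ℝ) (hc : 0 < c)
    (hbound : ∀ ε : ℝ, 0 < ε → ∃ T : ℝ, ∀ t > T, V' t ≤ -(F (x t) - Fmin) + c * ε) :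
    Filter.Tendsto (fun t => F (x t)) Filter.atTop (nhds Fmin) := by
  have hFcont : Continuous F := hdiff.continuous
  set K : Set (EuclideanSpace ℝ (Fin m)) := closure (Set.range x) ∪ X with hKdef
  have hKcomp : IsCompact K := hxbdd.isCompact_closure.union hXcomp
  have hxK : ∀ t, x t ∈ K := fun t => Or.inl (subset_closure ⟨t, rfl⟩)
  have hPK : ∀ t, P (x t) ∈ K := fun t => Or.inr (hP (x t)).1
  -- ‖y - P y‖ equals the distance to X
  have hdistP : ∀ y, ‖y - P y‖ = Metric.infDist y X := by
    intro y
    refine le_antisymm ?_ ?_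
    · by_contra h
      push_neg at h
      obtain ⟨z, hz, hzlt⟩ := (Metric.infDist_lt_iff hXne).1 h
      have := (hP y).2 z hz
      rw [dist_eq_norm] at hzlt
      linarith
    · rw [← dist_eq_norm]
      exact Metric.infDist_le_dist_of_mem (hP y).1
  have hVnonneg : ∀ t, 0 ≤ V t := by
    intro t; rw [hV]; positivity
  -- gap lemma: away from X, F - Fmin is uniformly positive on K
  have gap : ∀ r : ℝ, 0 < r → ∃ δ > 0, ∀ t : ℝ, r ≤ ‖x t - P (x t)‖ →
      δ ≤ F (x t) - Fmin := by
    intro r hr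
    set S : Set (EuclideanSpace ℝ (Fin m)) :=
      K ∩ {y | r ≤ Metric.infDist y X} with hSdef
    have hScomp : IsCompact S :=
      hKcomp.inter_right (isClosed_le continuous_const (Metric.continuous_infDist_pt X))
    rcases S.eq_empty_or_nonempty with hSe | hSne
    · refine ⟨1, one_pos, fun t ht => ?_⟩
      exfalso
      have : x t ∈ S := ⟨hxK t, by rw [Set.mem_setOf_eq, ← hdistP (x t)]; exact ht⟩
      rw [hSe] at this; exact this
    · obtain ⟨y₀, hy₀S, hy₀min⟩ := hScomp.exists_isMinOn hSne hFcont.continuousOn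
      have hy₀X : y₀ ∉ X := by
        intro hmem
        have h0 : Metric.infDist y₀ X = 0 := Metric.infDist_zero_of_mem hmem
        have h1 : r ≤ Metric.infDist y₀ X := hy₀S.2
        rw [h0] at h1
        linarith
      have hy₀pos : Fmin < F y₀ := by
        have : ¬ (∀ y, F y₀ ≤ F y) := by
          intro h; exact hy₀X (hargmin ▸ h)
        push_neg at this
        obtain ⟨y, hy⟩ := this
        exact lt_of_le_of_lt (hFmin y) hy
      refine ⟨F y₀ - Fmin, by linarith, fun t ht => ?_⟩
      have hxtS : x t ∈ S := ⟨hxK t, by rw [Set.mem_setOf_eq, ← hdistP (x t)]; exact ht⟩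
      have := hy₀min hxtS
      simp only [Set.mem_setOf_eq] at this
      linarith [this]
  -- key: V is eventually small
  have key : ∀ ρ : ℝ, 0 < ρ → ∃ T : ℝ, ∀ t ≥ T, V t ≤ ρ := by
    intro ρ hρ
    obtain ⟨δ, hδ, hgap⟩ := gap (Real.sqrt ρ) (Real.sqrt_pos.2 hρ)
    obtain ⟨T₀, hT₀⟩ := hbound (δ / (2 * c)) (by positivity)
    have hcε : c * (δ / (2 * c)) = δ / 2 := by field_simp
    set T₁ : ℝ := max T₀ 0 + 1 with hT₁def
    have hT₁pos : 0 < T₁ := by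
      have : (0:ℝ) ≤ max T₀ 0 := le_max_right _ _
      linarith
    have hT₁gt : T₀ < T₁ := by
      have : T₀ ≤ max T₀ 0 := le_max_left _ _
      linarith
    -- derivative is ≤ -δ/2 whenever V ≥ ρ, for t > T₀
    have hdec : ∀ t, T₀ < t → ρ ≤ V t → V' t ≤ -(δ / 2) := by
      intro t ht hVt
      have hn : Real.sqrt ρ ≤ ‖x t - P (x t)‖ := by
        rw [hV] at hVt
        simp only at hVt
        have h1 : ρ ≤ ‖x t - P (x t)‖ ^ 2 := by nlinarith [norm_nonneg (x t - P (x t))]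
        calc Real.sqrt ρ ≤ Real.sqrt (‖x t - P (x t)‖ ^ 2) := Real.sqrt_le_sqrt h1
          _ = ‖x t - P (x t)‖ := Real.sqrt_sq (norm_nonneg _)
      have h2 := hgap t hn
      have h3 := hT₀ t ht
      rw [hcε] at h3
      linarith
    -- decay estimate on intervals where V ≥ ρ
    have anti : ∀ a b : ℝ, T₁ ≤ a → a ≤ b → (∀ u, a < u → u < b → ρ ≤ V u) →
        V b ≤ V a - δ / 2 * (b - a) := by
      intro a b ha hab hmid
      rcases eq_or_lt_of_le hab with rfl | hab'
      · simp
      · set g : ℝ → ℝ := fun u => V u + δ / 2 * u with hg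
        have hgd : ∀ u ∈ Set.Icc a b, HasDerivAt g (V' u + δ / 2) u := by
          intro u hu
          have hu0 : (0:ℝ) ≤ u := le_trans (le_of_lt hT₁pos) (le_trans ha hu.1)
          exact (hV' u hu0).add ((hasDerivAt_id u).const_mul (δ / 2) |>.congr_deriv
            (by ring))
        have hanti : AntitoneOn g (Set.Icc a b) := by
          apply antitoneOn_of_deriv_nonpos (convex_Icc a b)
          · exact fun u hu => ((hgd u hu).continuousAt).continuousWithinAt
          · intro u hu
            rw [interior_Icc] at hu
            exact ((hgd u ⟨le_of_lt hu.1, le_of_lt hu.2⟩).differentiableAt).differentiableWithinAt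
          · intro u hu
            rw [interior_Icc] at hu
            rw [(hgd u ⟨le_of_lt hu.1, le_of_lt hu.2⟩).deriv]
            have := hdec u (lt_of_lt_of_le hT₁gt (le_trans ha (le_of_lt hu.1)))
              (hmid u hu.1 hu.2)
            linarith
        have := hanti (Set.left_mem_Icc.2 hab) (Set.right_mem_Icc.2 hab) hab
        simp only [hg] at this
        linarith
    -- V eventually drops below ρ
    have claim1 : ∃ t₁ ≥ T₁, V t₁ < ρ := by
      by_contra h
      push_neg at h
      have hVT₁ : 0 ≤ V T₁ := hVnonneg T₁
      have hepos : 0 ≤ 2 * (V T₁ + 1) / δ := by positivity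
      have hble : T₁ ≤ T₁ + 2 * (V T₁ + 1) / δ := by linarith
      have hanti := anti T₁ (T₁ + 2 * (V T₁ + 1) / δ) le_rfl hble
          (fun u hu _ => h u (le_of_lt hu))
      have heq : δ / 2 * (T₁ + 2 * (V T₁ + 1) / δ - T₁) = V T₁ + 1 := by
        field_simp; ring
      rw [heq] at hanti
      linarith [hVnonneg (T₁ + 2 * (V T₁ + 1) / δ)]
    obtain ⟨t₁, ht₁, hVt₁⟩ := claim1
    refine ⟨t₁, fun t ht => ?_⟩
    by_contra hcon
    push_neg at hcon
    have ht₁t : t₁ < t := by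
      rcases eq_or_lt_of_le ht with rfl | h
      · exact absurd hVt₁ (not_lt.2 (le_of_lt hcon))
      · exact h
    -- V is continuous on [t₁, t]
    have hVcont : ContinuousOn V (Set.Icc t₁ t) := by
      intro u hu
      have hu0 : (0:ℝ) ≤ u := le_trans (le_of_lt hT₁pos) (le_trans ht₁ hu.1)
      exact ((hV' u hu0).continuousAt).continuousWithinAt
    set A : Set ℝ := Set.Icc t₁ t ∩ V ⁻¹' Set.Iic ρ with hA
    have hAne : A.Nonempty := ⟨t₁, Set.left_mem_Icc.2 (le_of_lt ht₁t), le_of_lt hVt₁⟩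
    have hAclosed : IsClosed A :=
      hVcont.preimage_isClosed_of_isClosed isClosed_Icc isClosed_Iic
    have hAbdd : BddAbove A := ⟨t, fun u hu => hu.1.2⟩
    set s : ℝ := sSup A with hs
    have hsA : s ∈ A := hAclosed.csSup_mem hAne hAbdd
    have hst : s ≤ t := hsA.1.2
    have hsne : s ≠ t := fun h => absurd hsA.2 (by simp [h, Set.mem_Iic]; exact hcon)
    have hslt : s < t := lt_of_le_of_ne hst hsne
    have hmid : ∀ u, s < u → u < t → ρ ≤ V u := by
      intro u hsu hut
      by_contra hco
      push_neg at hco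
      have : u ∈ A := ⟨⟨le_trans hsA.1.1 (le_of_lt hsu), le_of_lt hut⟩, le_of_lt hco⟩
      have := le_csSup hAbdd this
      rw [← hs] at this
      linarith
    have := anti s t (le_trans ht₁ hsA.1.1) (le_of_lt hslt) hmid
    have hVs : V s ≤ ρ := hsA.2
    nlinarith [this, hVs, hslt]
  -- final assembly
  rw [Metric.tendsto_atTop]
  intro η hη
  have hUC := Metric.uniformContinuousOn_iff.1
    (hKcomp.uniformContinuousOn_of_continuous hFcont.continuousOn) η hη
  obtain ⟨r, hr, hUC'⟩ := hUC
  obtain ⟨T, hT⟩ := key (r ^ 2 / 4) (by positivity)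
  refine ⟨T, fun t ht => ?_⟩
  have hVt := hT t ht
  have hnorm : ‖x t - P (x t)‖ < r := by
    rw [hV] at hVt
    simp only at hVt
    nlinarith [norm_nonneg (x t - P (x t))]
  have hdist : dist (x t) (P (x t)) < r := by rwa [dist_eq_norm]
  have := hUC' (x t) (hxK t) (P (x t)) (hPK t) hdist
  rw [hFmin' (P (x t)) (hP (x t)).1] at this
  simpa using this
end

section
/- Suppose ‖x_{i0}(t) - x_{j0}(t)‖ ≤ 2ρ for all t ≥ T₀, and on disjoint intervals [t_{k3}, t_{k4}) the second derivative of ‖x_{i0} - x_{j0}‖ is at most -2c while on the complementary intervals [t_{k4}, t_{k+1,3}) it is at most 2c, for a constant c > 0. If Σ_k (t_{k4} - t_{k3}) = ∞, then Σ_k (t_{k+1,3} - t_{k4}) = ∞. -/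
/-- Mean-value-type bound: if `f` has derivative `f'` on `[p,q]` and `f' ≤ L` on `[p,q)`,
then `f q ≤ f p + L * (q - p)`. -/
lemma deriv_bound_aux (f f' : ℝ → ℝ) (p q L : ℝ) (hpq : p ≤ q)
    (hderiv : ∀ t ∈ Set.Icc p q, HasDerivAt f (f' t) t)
    (hb : ∀ t ∈ Set.Ico p q, f' t ≤ L) : f q ≤ f p + L * (q - p) := by
  have h : AntitoneOn (fun t => f t - L * t) (Set.Icc p q) := by
    apply antitoneOn_of_deriv_nonpos (convex_Icc p q)
    · exact fun t ht => (((hderiv t ht).sub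
        (((hasDerivAt_id t).const_mul L))).continuousAt).continuousWithinAt
    · intro t ht
      rw [interior_Icc] at ht
      exact (((hderiv t ⟨ht.1.le, ht.2.le⟩).sub
        ((hasDerivAt_id t).const_mul L)).differentiableAt).differentiableWithinAt
    · intro t ht
      rw [interior_Icc] at ht
      have hd : HasDerivAt (fun t => f t - L * t) (f' t - L * 1) t :=
        (hderiv t ⟨ht.1.le, ht.2.le⟩).sub ((hasDerivAt_id t).const_mul L)
      rw [hd.deriv]
      have := hb t ⟨ht.1.le, ht.2⟩
      linarith
  have h2 := h ⟨le_refl p, hpq⟩ ⟨hpq, le_refl q⟩ hpq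
  simp only at h2
  linarith

/-- If the distance ‖x(t) - y(t)‖ is bounded by 2ρ, its second derivative is ≤ -2c on the
intervals [a k, b k) and ≤ 2c on the complementary intervals [b k, a (k+1)), and
Σ(b k - a k) = ∞, then also Σ(a (k+1) - b k) = ∞. -/
theorem interval_lengths_diverge (m : ℕ) (T₀ ρ c : ℝ) (hρ : 0 < ρ) (hc : 0 < c)
    (x y : ℝ → EuclideanSpace ℝ (Fin m))
    (D D' D'' : ℝ → ℝ)
    (hD : D = fun t => ‖x t - y t‖)
    (hDderiv : ∀ t ≥ T₀, HasDerivAt D (D' t) t)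
    (hD'deriv : ∀ t ≥ T₀, HasDerivAt D' (D'' t) t)
    (hDbdd : ∀ t ≥ T₀, D t ≤ 2 * ρ)
    (a b : ℕ → ℝ) (ha0 : a 0 = T₀)
    (hab : ∀ k, a k < b k) (hba : ∀ k, b k < a (k + 1))
    (hdec : ∀ k, ∀ t ∈ Set.Ico (a k) (b k), D'' t ≤ -(2 * c))
    (hinc : ∀ k, ∀ t ∈ Set.Ico (b k) (a (k + 1)), D'' t ≤ 2 * c)
    (hdiv : ¬ Summable (fun k => b k - a k)) :
    ¬ Summable (fun k => a (k + 1) - b k) := by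
  classical
  intro hsum
  have hamono : StrictMono a :=
    strictMono_nat_of_lt_succ (fun k => (hab k).trans (hba k))
  have haT : ∀ k, T₀ ≤ a k := fun k => ha0 ▸ hamono.monotone (Nat.zero_le k)
  have hbT : ∀ k, T₀ ≤ b k := fun k => (haT k).trans (hab k).le
  have hu : ∀ k, 0 ≤ b k - a k := fun k => sub_nonneg.2 (hab k).le
  have hv : ∀ k, 0 ≤ a (k + 1) - b k := fun k => sub_nonneg.2 (hba k).le
  -- a is unbounded
  have haunb : ∀ B : ℝ, ∃ k, B < a k := by
    by_contra h
    push_neg at h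
    obtain ⟨B, hB⟩ := h
    apply hdiv
    apply summable_of_sum_range_le (c := B - T₀) hu
    intro n
    have h1 : ∑ k ∈ Finset.range n, (b k - a k)
        ≤ ∑ k ∈ Finset.range n, (a (k + 1) - a k) := by
      apply Finset.sum_le_sum
      intro k _
      have := hba k
      linarith
    rw [Finset.sum_range_sub a] at h1
    have := hB n
    have := haT 0
    rw [ha0] at h1
    linarith [hB n]
  -- global second derivative bound on [T₀, ∞)
  have hD''le : ∀ t ≥ T₀, D'' t ≤ 2 * c := by
    intro t ht
    have hex : ∃ n, t < a n := haunb t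
    set N := Nat.find hex with hNdef
    have hN : t < a N := Nat.find_spec hex
    have hN0 : N ≠ 0 := by
      intro h0
      rw [h0, ha0] at hN
      linarith
    obtain ⟨k, hk⟩ := Nat.exists_eq_succ_of_ne_zero hN0
    have hak : a k ≤ t := by
      by_contra h
      push_neg at h
      have := Nat.find_min hex (m := k) (by omega) h
      exact this
    rcases lt_or_ge t (b k) with h | h
    · have := hdec k t ⟨hak, h⟩
      linarith
    · exact hinc k t ⟨h, by rw [hk] at hN; exact hN⟩
  -- telescoping bound on D' (a n)
  have hstep : ∀ n, D' (a n) ≤ D' T₀ - 2 * c * (∑ k ∈ Finset.range n, (b k - a k))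
      + 2 * c * (∑ k ∈ Finset.range n, (a (k + 1) - b k)) := by
    intro n
    induction n with
    | zero => simp [ha0]
    | succ n ih =>
      have h1 : D' (b n) ≤ D' (a n) + (-(2 * c)) * (b n - a n) := by
        apply deriv_bound_aux D' D'' (a n) (b n) _ (hab n).le
        · exact fun t ht => hD'deriv t ((haT n).trans ht.1)
        · exact fun t ht => hdec n t ht
      have h2 : D' (a (n + 1)) ≤ D' (b n) + (2 * c) * (a (n + 1) - b n) := by
        apply deriv_bound_aux D' D'' (b n) (a (n + 1)) _ (hba n).le
        · exact fun t ht => hD'deriv t ((hbT n).trans ht.1)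
        · exact fun t ht => hinc n t ht
      rw [Finset.sum_range_succ, Finset.sum_range_succ]
      nlinarith [hc]
  -- partial sums of u tend to infinity
  have hP : Filter.Tendsto (fun n => ∑ k ∈ Finset.range n, (b k - a k))
      Filter.atTop Filter.atTop := by
    rcases not_summable_iff_tendsto_nat_atTop_of_nonneg hu |>.mp hdiv with h
    exact h
  set S := ∑' k, (a (k + 1) - b k) with hSdef
  have hVbd : ∀ n, ∑ k ∈ Finset.range n, (a (k + 1) - b k) ≤ S :=
    fun n => Summable.sum_le_tsum (Finset.range n) (fun k _ => hv k) hsum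
  -- pick n with D' (a n) very negative
  set M := (D' T₀ + 2 * c * S + 2 * ρ + c + 1) / (2 * c) with hMdef
  obtain ⟨n, hn⟩ := (hP.eventually (Filter.eventually_ge_atTop M)).exists
  have h2c : (0:ℝ) < 2 * c := by linarith
  have hMn : 2 * c * M = D' T₀ + 2 * c * S + 2 * ρ + c + 1 := by
    rw [hMdef]
    field_simp
  have hD'neg : D' (a n) ≤ -(2 * ρ + c + 1) := by
    have h1 := hstep n
    have h2 := hVbd n
    nlinarith [mul_le_mul_of_nonneg_left hn h2c.le]
  set s := a n with hsdef
  have hsT : T₀ ≤ s := haT n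
  -- on [s, s+1], D' t ≤ D' s + 2c (t - s)
  have hkey2 : ∀ t ∈ Set.Icc s (s + 1), D' t ≤ D' s + 2 * c * (t - s) := by
    intro t ht
    apply deriv_bound_aux D' D'' s t (2 * c) ht.1
    · exact fun r hr => hD'deriv r (hsT.trans hr.1)
    · exact fun r hr => hD''le r (hsT.trans hr.1)
  -- now bound D (s+1)
  have hφ : D (s + 1) ≤ D s + D' s * 1 + c * 1 := by
    have h := deriv_bound_aux (fun t => D t - D' s * t - c * (t - s) ^ 2)
      (fun t => D' t - D' s - c * (2 * (t - s))) s (s + 1) 0 (by linarith)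
      (fun t ht => by
        have hd1 : HasDerivAt D (D' t) t := hDderiv t (hsT.trans ht.1)
        have hd2 : HasDerivAt (fun t => D' s * t) (D' s * 1) t :=
          (hasDerivAt_id t).const_mul (D' s)
        have hd3 : HasDerivAt (fun t => (t - s) ^ 2) (2 * (t - s) ^ 1 * 1) t :=
          ((hasDerivAt_id t).sub_const s).pow 2
        have hd4 : HasDerivAt (fun t => c * (t - s) ^ 2) (c * (2 * (t - s) ^ 1 * 1)) t :=
          hd3.const_mul c
        have : HasDerivAt (fun t => D t - D' s * t - c * (t - s) ^ 2)
            (D' t - D' s * 1 - c * (2 * (t - s) ^ 1 * 1)) t := (hd1.sub hd2).sub hd4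
        convert this using 1
        ring)
      (fun t ht => by
        have h1 := hkey2 t ⟨ht.1, ht.2.le⟩
        have h2 : c * (2 * (t - s)) = 2 * c * (t - s) := by ring
        linarith)
    nlinarith [h]
  have hDnn : 0 ≤ D (s + 1) := by rw [hD]; positivity
  have hDb : D s ≤ 2 * ρ := hDbdd s hsT
  linarith
end

section
/- If v : [0,∞) → ℝ^m is uniformly continuous (e.g., Lipschitz, coming from a bounded derivative) and ∫_0^∞ ‖v(t)‖² dt < ∞, then v(t) → 0 as t → ∞. -/
open MeasureTheory

/-- Barbalat-type lemma: a uniformly continuous function on [0,∞) whose squared norm is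
integrable tends to 0 at infinity. -/
theorem barbalat (m : ℕ) (v : ℝ → EuclideanSpace ℝ (Fin m))
    (hUC : UniformContinuous v)
    (hint : IntegrableOn (fun t => ‖v t‖ ^ 2) (Set.Ici 0)) :
    Filter.Tendsto v Filter.atTop (nhds 0) := by
  by_contra h
  rw [Metric.tendsto_atTop] at h
  push_neg at h
  obtain ⟨ε, hε, hbad⟩ := h
  -- uniform continuity
  rw [Metric.uniformContinuous_iff] at hUC
  obtain ⟨δ, hδ, hUC⟩ := hUC (ε / 2) (by linarith)
  set f : ℝ → ℝ := fun t => ‖v t‖ ^ 2 with hf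
  have hint' : IntegrableOn f (Set.Ioi 0) := hint.mono_set Set.Ioi_subset_Ici_self
  set I : ℝ := ∫ t in Set.Ioi 0, f t with hI
  set c : ℝ := (ε / 2) ^ 2 * (δ / 2) with hc
  have hcpos : 0 < c := by positivity
  have htend := intervalIntegral_tendsto_integral_Ioi 0 hint' (Filter.tendsto_id (α := ℝ))
  have hev : ∀ᶠ b in Filter.atTop, I - c < ∫ x in (0:ℝ)..b, f x := by
    have := htend.eventually (eventually_gt_nhds (show I - c < I by linarith))
    exact this
  obtain ⟨T, hT⟩ := hev.exists_forall_of_atTop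
  obtain ⟨t, ht, htbad⟩ := hbad (max T 0)
  have htT : T ≤ t := le_trans (le_max_left _ _) ht
  have ht0 : (0:ℝ) ≤ t := le_trans (le_max_right _ _) ht
  have hvt : ε ≤ ‖v t‖ := by simpa using htbad
  -- lower bound on [t, t+δ/2]
  have hlow : ∀ s ∈ Set.Ioc t (t + δ / 2), (ε / 2) ^ 2 ≤ f s := by
    intro s hs
    have hdist : dist s t < δ := by
      rw [Real.dist_eq, abs_of_nonneg (by linarith [hs.1.le])]
      linarith [hs.2]
    have := hUC hdist
    have hvs : ε / 2 ≤ ‖v s‖ := by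
      have h1 : dist (v s) (v t) < ε / 2 := this
      have h2 : ‖v t‖ - ‖v s‖ ≤ dist (v s) (v t) := by
        rw [dist_eq_norm]
        have := norm_sub_norm_le (v t) (v s)
        rw [norm_sub_rev] at this
        linarith
      linarith
    have : (ε / 2) ^ 2 ≤ ‖v s‖ ^ 2 := by
      apply pow_le_pow_left₀ (by linarith) hvs
    simpa [hf] using this
  have hsub : Set.Ioc t (t + δ / 2) ⊆ Set.Ici (0:ℝ) := fun s hs => le_trans ht0 hs.1.le
  have hint2 : IntegrableOn f (Set.Ioc t (t + δ / 2)) := hint.mono_set hsub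
  have hmeas : volume (Set.Ioc t (t + δ / 2)) ≠ ⊤ := by
    simp [Real.volume_Ioc]
  have hlb : c ≤ ∫ s in Set.Ioc t (t + δ / 2), f s := by
    have := setIntegral_ge_of_const_le (c := (ε / 2) ^ 2) measurableSet_Ioc hmeas hlow hint2
    rwa [Real.volume_real_Ioc_of_le (by linarith), smul_eq_mul, show t + δ/2 - t = δ/2 by ring, mul_comm] at this
  -- additivity and upper bound by I
  have hIoc1 : (∫ x in (0:ℝ)..t, f x) = ∫ s in Set.Ioc 0 t, f s :=
    intervalIntegral.integral_of_le ht0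
  have hIoc2 : (∫ x in (0:ℝ)..(t + δ/2), f x) = ∫ s in Set.Ioc 0 (t + δ/2), f s :=
    intervalIntegral.integral_of_le (by linarith)
  have hadd : (∫ x in (0:ℝ)..t, f x) + (∫ x in t..(t + δ/2), f x)
      = ∫ x in (0:ℝ)..(t + δ/2), f x := by
    apply intervalIntegral.integral_add_adjacent_intervals
    · exact (intervalIntegrable_iff_integrableOn_Ioc_of_le ht0).2
        (hint.mono_set (fun s hs => le_trans le_rfl hs.1.le))
    · exact (intervalIntegrable_iff_integrableOn_Ioc_of_le (by linarith)).2 hint2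
  have hmid : (∫ x in t..(t + δ/2), f x) = ∫ s in Set.Ioc t (t + δ / 2), f s :=
    intervalIntegral.integral_of_le (by linarith)
  have hfnonneg : 0 ≤ᵐ[volume.restrict (Set.Ioi 0)] f :=
    Filter.Eventually.of_forall (fun s => by positivity)
  have hup : (∫ s in Set.Ioc 0 (t + δ/2), f s) ≤ I := by
    apply setIntegral_mono_set hint' hfnonneg
    exact Filter.Eventually.of_forall (fun s hs => hs.1)
  have h1 : I - c < ∫ x in (0:ℝ)..t, f x := hT t htT
  have : I - c + c < I := by
    calc I - c + c < (∫ x in (0:ℝ)..t, f x) + (∫ x in t..(t + δ/2), f x) := by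
          rw [hmid]; exact add_lt_add_of_lt_of_le h1 hlb
      _ = ∫ x in (0:ℝ)..(t + δ/2), f x := hadd
      _ = ∫ s in Set.Ioc 0 (t + δ/2), f s := hIoc2
      _ ≤ I := hup
  linarith
end
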